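/- Let X be a topologically enriched small category with at least one object and let g: Z → X be a map of flows which is a weak equivalence of the q-model structure of Flow (a bijection on states and weak homotopy equivalences on all path spaces), for instance a q-cofibrant replacement of X. Then the induced enriched functor 𝕀(Z) → X is not a weak equivalence of (Cat)_q: for any object α, the map 𝕀(Z)(α,α) = {id_α} ⊔ P_{α,α}Z → X(α,α) is not a weak homotopy equivalence. Consequently the left Quillen adjoint 𝕀: (Flow)_q → (Cat)_q is not a left Quillen equivalence. -/

import Mathlib

open CategoryTheory

noncomputable section

/-! ### Flows: small semicategories enriched in topological spaces -/

structure DFlow : Type 1 where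
  States : Type
  Path : States → States → Type
  str : ∀ α β, TopologicalSpace (Path α β)
  comp : ∀ {α β γ : States}, Path α β → Path β γ → Path α γ
  continuous_comp : ∀ α β γ, Continuous (fun p : Path α β × Path β γ => comp p.1 p.2)
  assoc : ∀ {α β γ δ : States} (x : Path α β) (y : Path β γ) (z : Path γ δ),
    comp (comp x y) z = comp x (comp y z)

attribute [instance] DFlow.str

/-- Morphisms of flows. -/
structure FlowHom (X Y : DFlow) where
  toFun : X.States → Y.States
  map : ∀ {α β : X.States}, X.Path α β → Y.Path (toFun α) (toFun β)
  continuous_map : ∀ α β : X.States, Continuous fun p : X.Path α β => map p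
  map_comp : ∀ {α β γ : X.States} (x : X.Path α β) (y : X.Path β γ),
    map (X.comp x y) = Y.comp (map x) (map y)

instance : Category DFlow where
  Hom := FlowHom
  id X := ⟨id, fun p => p, fun _ _ => continuous_id, fun _ _ => rfl⟩
  comp f g := ⟨g.toFun ∘ f.toFun, fun p => g.map (f.map p),
    fun α β => (g.continuous_map _ _).comp (f.continuous_map _ _),
    fun x y => by simp only [f.map_comp, g.map_comp]⟩

lemma continuous_of_isEmpty {X Y : Type} [TopologicalSpace X] [TopologicalSpace Y]
    (h : IsEmpty X) (f : X → Y) : Continuous f :=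
  continuous_iff_continuousAt.mpr fun x => h.elim x

/-- A set viewed as a flow with empty spaces of execution paths. -/
def DFlow.ofSet (S : Type) : DFlow where
  States := S
  Path _ _ := Empty
  str _ _ := ⊥
  comp x _ := x.elim
  continuous_comp _ _ _ := continuous_of_isEmpty (inferInstanceAs (IsEmpty (Empty × Empty))) _
  assoc x _ _ := x.elim

/-- The empty flow. -/
def emptyFlow : DFlow := DFlow.ofSet Empty

/-- The flow `{0}` with one state and no execution path. -/
def pointFlow : DFlow := DFlow.ofSet PUnit

/-- The flow `{0, 1}` with two states and no execution path. -/
def twoFlow : DFlow := DFlow.ofSet Bool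

/-- The terminal flow. -/
def terminalFlow : DFlow where
  States := PUnit
  Path _ _ := PUnit
  str _ _ := ⊥
  comp _ _ := PUnit.unit
  continuous_comp _ _ _ := continuous_const
  assoc _ _ _ := rfl

/-- The map of flows `C : ∅ → {0}`. -/
def Cmap : emptyFlow ⟶ pointFlow :=
  ⟨fun x => x.elim, fun {α} _ _ => α.elim, fun α _ => α.elim, fun {α} _ _ _ _ => α.elim⟩

/-- The map of flows `R : {0,1} → {0}`. -/
def Rmap : twoFlow ⟶ pointFlow :=
  ⟨fun _ => PUnit.unit, fun p => p.elim, fun _ _ => @continuous_of_isEmpty _ _ (twoFlow.str _ _) (pointFlow.str _ _) (inferInstanceAs (IsEmpty Empty)) _, fun x _ => x.elim⟩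

/-- The map of flows `C⁺ : {0} → {0,1}`. -/
def Cplus : pointFlow ⟶ twoFlow :=
  ⟨fun _ => false, fun p => p.elim, fun _ _ => @continuous_of_isEmpty _ _ (pointFlow.str _ _) (twoFlow.str _ _) (inferInstanceAs (IsEmpty Empty)) _, fun x _ => x.elim⟩

/-- The canonical map from the empty flow. -/
def DFlow.fromEmpty (X : DFlow) : emptyFlow ⟶ X :=
  ⟨fun x => x.elim, fun {α} _ => α.elim, fun α _ => α.elim, fun {α} _ _ _ _ => α.elim⟩

/-- The canonical map to the terminal flow. -/
def DFlow.toTerminal (X : DFlow) : X ⟶ terminalFlow :=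
  ⟨fun _ => PUnit.unit, fun _ => PUnit.unit, fun _ _ => @continuous_const _ _ _ (terminalFlow.str _ _) _, fun _ _ => rfl⟩

/-! ### Globes -/

/-- The path spaces of the globe `Glob(Z)`. -/
def GlobPath (Z : Type) : Bool → Bool → Type
  | false, true => Z
  | _, _ => Empty

instance globPathTop (Z : Type) [TopologicalSpace Z] :
    ∀ a b, TopologicalSpace (GlobPath Z a b)
  | false, true => inferInstanceAs (TopologicalSpace Z)
  | false, false => ⊥
  | true, false => ⊥
  | true, true => ⊥

instance globPathIsEmpty (Z : Type) : ∀ (a : Bool), IsEmpty (GlobPath Z a a)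
  | false => inferInstanceAs (IsEmpty Empty)
  | true => inferInstanceAs (IsEmpty Empty)

/-- The globe of a topological space. -/
def DFlow.glob (Z : Type) [TopologicalSpace Z] : DFlow where
  States := Bool
  Path := GlobPath Z
  str := globPathTop Z
  comp {a b c} x y :=
    match a, b, c, x, y with
    | false, false, _, x, _ => x.elim
    | false, true, false, _, y => y.elim
    | false, true, true, _, y => y.elim
    | true, false, _, x, _ => x.elim
    | true, true, _, x, _ => x.elim
  continuous_comp a b c :=
    match a, b, c with
    | false, false, false => continuous_of_isEmpty ⟨fun p => p.1.elim⟩ _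
    | false, false, true => continuous_of_isEmpty ⟨fun p => p.1.elim⟩ _
    | false, true, false => continuous_of_isEmpty ⟨fun p => p.2.elim⟩ _
    | false, true, true => continuous_of_isEmpty ⟨fun p => p.2.elim⟩ _
    | true, false, false => continuous_of_isEmpty ⟨fun p => p.1.elim⟩ _
    | true, false, true => continuous_of_isEmpty ⟨fun p => p.1.elim⟩ _
    | true, true, false => continuous_of_isEmpty ⟨fun p => p.1.elim⟩ _
    | true, true, true => continuous_of_isEmpty ⟨fun p => p.1.elim⟩ _
  assoc {a b c d} x y z :=
    match a, b, c, d, x, y, z with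
    | false, false, _, _, x, _, _ => x.elim
    | false, true, false, _, _, y, _ => y.elim
    | false, true, true, false, _, y, _ => y.elim
    | false, true, true, true, _, y, _ => y.elim
    | true, _, _, _, x, _, _ => x.elim

/-- The functorial action of `Glob` on a continuous map. -/
def DFlow.globMap {Z W : Type} [TopologicalSpace Z] [TopologicalSpace W] (f : Z → W)
    (hf : Continuous f) : DFlow.glob Z ⟶ DFlow.glob W where
  toFun := id
  map {a b} x :=
    match a, b, x with
    | false, true, x => f x
    | false, false, x => x.elim
    | true, false, x => x.elim
    | true, true, x => x.elim
  continuous_map a b :=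
    match a, b with
    | false, true => hf
    | false, false => @continuous_of_isEmpty _ _ ((DFlow.glob Z).str _ _) ((DFlow.glob W).str _ _) (inferInstanceAs (IsEmpty Empty)) _
    | true, false => @continuous_of_isEmpty _ _ ((DFlow.glob Z).str _ _) ((DFlow.glob W).str _ _) (inferInstanceAs (IsEmpty Empty)) _
    | true, true => @continuous_of_isEmpty _ _ ((DFlow.glob Z).str _ _) ((DFlow.glob W).str _ _) (inferInstanceAs (IsEmpty Empty)) _
  map_comp {a b c} x y :=
    match a, b, c, x, y with
    | false, false, _, x, _ => x.elim
    | false, true, false, _, y => y.elim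
    | false, true, true, _, y => y.elim
    | true, _, _, x, _ => x.elim

/-- The directed segment, the globe of a one-point space. -/
def Iseg : DFlow := DFlow.glob PUnit

/-! ### Disks and spheres -/

/-- The `n`-dimensional disk `D^n`. -/
def gDisk (n : ℕ) : Type := (Metric.closedBall (0 : EuclideanSpace ℝ (Fin n)) 1 : Set _)

/-- The sphere `S^{n-1}`, boundary of the `n`-dimensional disk. -/
def gSphere (n : ℕ) : Type := (Metric.sphere (0 : EuclideanSpace ℝ (Fin n)) 1 : Set _)

instance (n : ℕ) : TopologicalSpace (gDisk n) :=
  inferInstanceAs (TopologicalSpace (Metric.closedBall (0 : EuclideanSpace ℝ (Fin n)) 1))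

instance (n : ℕ) : TopologicalSpace (gSphere n) :=
  inferInstanceAs (TopologicalSpace (Metric.sphere (0 : EuclideanSpace ℝ (Fin n)) 1))

/-- The inclusion `S^{n-1} ⊆ D^n`. -/
def sphereIncl (n : ℕ) : gSphere n → gDisk n :=
  fun x => ⟨x.1, Metric.sphere_subset_closedBall x.2⟩

lemma continuous_sphereIncl (n : ℕ) : Continuous (sphereIncl n) :=
  Continuous.subtype_mk continuous_subtype_val _

/-- The generating cofibration `c_n : Glob(S^{n-1}) → Glob(D^n)`. -/
def cFlow (n : ℕ) : DFlow.glob (gSphere n) ⟶ DFlow.glob (gDisk n) :=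
  DFlow.globMap (sphereIncl n) (continuous_sphereIncl n)

/-- `{0}` as a subspace of `ℝ`. -/
def zeroSpace : Type := ({(0 : ℝ)} : Set ℝ)

instance : TopologicalSpace zeroSpace := inferInstanceAs (TopologicalSpace ({(0:ℝ)} : Set ℝ))

/-- The inclusion `D^n × {0} → D^n × [0,1]`. -/
def cylIncl (n : ℕ) : gDisk n × zeroSpace → gDisk n × unitInterval :=
  fun p => (p.1, ⟨p.2.1, by
    rcases p.2 with ⟨x, hx⟩
    simp only [Set.mem_singleton_iff] at hx
    subst hx
    exact unitInterval.zero_mem⟩)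

lemma continuous_cylIncl (n : ℕ) : Continuous (cylIncl n) :=
  continuous_fst.prodMk (Continuous.subtype_mk (continuous_subtype_val.comp continuous_snd) _)

/-- The generating trivial cofibration `Glob(D^n × {0}) → Glob(D^n × [0,1])`. -/
def jFlow (n : ℕ) : DFlow.glob (gDisk n × zeroSpace) ⟶ DFlow.glob (gDisk n × unitInterval) :=
  DFlow.globMap (cylIncl n) (continuous_cylIncl n)

/-! ### Generating sets of maps, as morphism properties -/

/-- The set `I^gl = {c_n : Glob(S^{n-1}) → Glob(D^n) | n ≥ 0}`. -/
def Igl : MorphismProperty DFlow := fun X Y f =>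
  ∃ n : ℕ, X = DFlow.glob (gSphere n) ∧ Y = DFlow.glob (gDisk n) ∧ HEq f (cFlow n)

/-- The set `I^gl_{≥1} = {c_n | n ≥ 1}`. -/
def IglGeOne : MorphismProperty DFlow := fun X Y f =>
  ∃ n : ℕ, 1 ≤ n ∧ X = DFlow.glob (gSphere n) ∧ Y = DFlow.glob (gDisk n) ∧ HEq f (cFlow n)

/-- The set `J^gl`. -/
def Jgl : MorphismProperty DFlow := fun X Y f =>
  ∃ n : ℕ, X = DFlow.glob (gDisk n × zeroSpace) ∧ Y = DFlow.glob (gDisk n × unitInterval) ∧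
    HEq f (jFlow n)

/-- The singleton `{C}`. -/
def Cprop : MorphismProperty DFlow := fun X Y f =>
  X = emptyFlow ∧ Y = pointFlow ∧ HEq f Cmap

/-- The singleton `{R}`. -/
def Rprop : MorphismProperty DFlow := fun X Y f =>
  X = twoFlow ∧ Y = pointFlow ∧ HEq f Rmap

/-- The set `I^gl ∪ {C}`. -/
def IglC : MorphismProperty DFlow := fun _ _ f => Igl f ∨ Cprop f

/-- The set `I^gl ∪ {C, R}`, generating cofibrations of the q-model structure. -/
def IglCR : MorphismProperty DFlow := fun _ _ f => Igl f ∨ Cprop f ∨ Rprop f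

/-! ### Lifting properties, cofibration and injectivity classes -/

/-- `rlpClass S` is `inj(S)`: maps with the RLP with respect to every map of `S`. -/
def rlpClass {M : Type _} [Category M] (S : MorphismProperty M) : MorphismProperty M :=
  fun _ _ p => ∀ {A B : M} (i : A ⟶ B), S i → HasLiftingProperty i p

/-- `llpClass S`: maps with the LLP with respect to every map of `S`. -/
def llpClass {M : Type _} [Category M] (S : MorphismProperty M) : MorphismProperty M :=
  fun _ _ i => ∀ {A B : M} (p : A ⟶ B), S p → HasLiftingProperty i p

/-- `cofClass S` is `cof(S) = llp(inj(S))`. -/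
def cofClass {M : Type _} [Category M] (S : MorphismProperty M) : MorphismProperty M :=
  llpClass (rlpClass S)

/-! ### Model structures -/

/-- A model structure on a category, specified by its weak equivalences,
cofibrations and fibrations. -/
structure ModelStructure (M : Type _) [Category M] where
  W : MorphismProperty M
  C : MorphismProperty M
  F : MorphismProperty M
  w_comp : ∀ {X Y Z : M} (f : X ⟶ Y) (g : Y ⟶ Z), W f → W g → W (f ≫ g)
  w_cancel_left : ∀ {X Y Z : M} (f : X ⟶ Y) (g : Y ⟶ Z), W f → W (f ≫ g) → W g
  w_cancel_right : ∀ {X Y Z : M} (f : X ⟶ Y) (g : Y ⟶ Z), W g → W (f ≫ g) → W f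
  w_retract : ∀ {X Y X' Y' : M} (f : X ⟶ Y) (g : X' ⟶ Y') (iX : X ⟶ X') (rX : X' ⟶ X)
    (iY : Y ⟶ Y') (rY : Y' ⟶ Y), iX ≫ rX = 𝟙 X → iY ≫ rY = 𝟙 Y →
    iX ≫ g = f ≫ iY → g ≫ rY = rX ≫ f → W g → W f
  cof_eq : C = llpClass (fun _ _ p => F p ∧ W p)
  fib_eq : F = rlpClass (fun _ _ i => C i ∧ W i)
  factor_triv_cof : ∀ {X Y : M} (f : X ⟶ Y),
    ∃ (Z : M) (i : X ⟶ Z) (p : Z ⟶ Y), C i ∧ W i ∧ F p ∧ i ≫ p = f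
  factor_triv_fib : ∀ {X Y : M} (f : X ⟶ Y),
    ∃ (Z : M) (i : X ⟶ Z) (p : Z ⟶ Y), C i ∧ F p ∧ W p ∧ i ≫ p = f

/-! ### The class of weak equivalences `W̄_DK` -/

/-- A flow "is a set": it has no execution path. -/
def DFlow.IsSetFlow (X : DFlow) : Prop := ∀ α β : X.States, IsEmpty (X.Path α β)

/-- A flow has at least one execution path. -/
def DFlow.HasExecPath (X : DFlow) : Prop := ∃ α β : X.States, Nonempty (X.Path α β)

/-- The class `W̄_DK` of maps of flows. -/
def WbarDK : MorphismProperty DFlow := fun X Y _ =>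
  (IsEmpty X.States ∧ IsEmpty Y.States) ∨
  (Nonempty X.States ∧ Nonempty Y.States ∧ X.IsSetFlow ∧ Y.IsSetFlow) ∨
  (X.HasExecPath ∧ Y.HasExecPath)

/-! ### Binary coproducts of flows -/

/-- Path spaces of the coproduct of two flows. -/
def SumPath (X Y : DFlow) : X.States ⊕ Y.States → X.States ⊕ Y.States → Type
  | .inl a, .inl b => X.Path a b
  | .inr a, .inr b => Y.Path a b
  | _, _ => Empty

instance sumPathTop (X Y : DFlow) : ∀ a b, TopologicalSpace (SumPath X Y a b)
  | .inl a, .inl b => inferInstanceAs (TopologicalSpace (X.Path a b))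
  | .inr a, .inr b => inferInstanceAs (TopologicalSpace (Y.Path a b))
  | .inl _, .inr _ => ⊥
  | .inr _, .inl _ => ⊥

/-- The coproduct of two flows. -/
def DFlow.sum (X Y : DFlow) : DFlow where
  States := X.States ⊕ Y.States
  Path := SumPath X Y
  str := sumPathTop X Y
  comp {a b c} x y :=
    match a, b, c, x, y with
    | .inl _, .inl _, .inl _, x, y => X.comp x y
    | .inr _, .inr _, .inr _, x, y => Y.comp x y
    | .inl _, .inl _, .inr _, _, y => y.elim
    | .inl _, .inr _, _, x, _ => x.elim
    | .inr _, .inl _, _, x, _ => x.elim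
    | .inr _, .inr _, .inl _, _, y => y.elim
  continuous_comp a b c :=
    match a, b, c with
    | .inl _, .inl _, .inl _ => X.continuous_comp _ _ _
    | .inr _, .inr _, .inr _ => Y.continuous_comp _ _ _
    | .inl _, .inl _, .inr _ => continuous_of_isEmpty ⟨fun p => p.2.elim⟩ _
    | .inl _, .inr _, _ => continuous_of_isEmpty ⟨fun p => p.1.elim⟩ _
    | .inr _, .inl _, _ => continuous_of_isEmpty ⟨fun p => p.1.elim⟩ _
    | .inr _, .inr _, .inl _ => continuous_of_isEmpty ⟨fun p => p.2.elim⟩ _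
  assoc {a b c d} x y z :=
    match a, b, c, d, x, y, z with
    | .inl _, .inl _, .inl _, .inl _, x, y, z => X.assoc x y z
    | .inr _, .inr _, .inr _, .inr _, x, y, z => Y.assoc x y z
    | .inl _, .inl _, .inl _, .inr _, _, _, z => z.elim
    | .inl _, .inl _, .inr _, _, _, y, _ => y.elim
    | .inl _, .inr _, _, _, x, _, _ => x.elim
    | .inr _, .inl _, _, _, x, _, _ => x.elim
    | .inr _, .inr _, .inl _, _, _, y, _ => y.elim
    | .inr _, .inr _, .inr _, .inl _, _, _, z => z.elim

/-- The coproduct of two maps of flows. -/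
def DFlow.sumMap {X X' Y Y' : DFlow} (f : X ⟶ X') (g : Y ⟶ Y') : X.sum Y ⟶ X'.sum Y' where
  toFun := Sum.map f.toFun g.toFun
  map {a b} x :=
    match a, b, x with
    | .inl _, .inl _, x => f.map x
    | .inr _, .inr _, x => g.map x
    | .inl _, .inr _, x => x.elim
    | .inr _, .inl _, x => x.elim
  continuous_map a b :=
    match a, b with
    | .inl _, .inl _ => f.continuous_map _ _
    | .inr _, .inr _ => g.continuous_map _ _
    | .inl _, .inr _ => @continuous_of_isEmpty _ _ ((X.sum Y).str _ _) ((X'.sum Y').str _ _) (inferInstanceAs (IsEmpty Empty)) _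
    | .inr _, .inl _ => @continuous_of_isEmpty _ _ ((X.sum Y).str _ _) ((X'.sum Y').str _ _) (inferInstanceAs (IsEmpty Empty)) _
  map_comp {a b c} x y :=
    match a, b, c, x, y with
    | .inl _, .inl _, .inl _, x, y => f.map_comp x y
    | .inr _, .inr _, .inr _, x, y => g.map_comp x y
    | .inl _, .inl _, .inr _, _, y => y.elim
    | .inl _, .inr _, _, x, _ => x.elim
    | .inr _, .inl _, _, x, _ => x.elim
    | .inr _, .inr _, .inl _, _, y => y.elim

/-- The map `c₀⁺ = id_{I⃗} ⊔ c₀ : I⃗ ⊔ Glob(S^{-1}) → I⃗ ⊔ Glob(D⁰)`. -/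
def cZeroPlus : Iseg.sum (DFlow.glob (gSphere 0)) ⟶ Iseg.sum (DFlow.glob (gDisk 0)) :=
  DFlow.sumMap (𝟙 Iseg) (cFlow 0)

/-- The singleton `{C⁺}`. -/
def CplusProp : MorphismProperty DFlow := fun X Y f =>
  X = pointFlow ∧ Y = twoFlow ∧ HEq f Cplus

/-- The singleton `{c₀⁺}`. -/
def cZeroPlusProp : MorphismProperty DFlow := fun X Y f =>
  X = Iseg.sum (DFlow.glob (gSphere 0)) ∧ Y = Iseg.sum (DFlow.glob (gDisk 0)) ∧ HEq f cZeroPlus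

/-- The set `{C⁺, c₀⁺} ∪ J^gl ∪ I^gl_{≥1}`. -/
def TrivCofGen : MorphismProperty DFlow := fun _ _ f =>
  CplusProp f ∨ cZeroPlusProp f ∨ Jgl f ∨ IglGeOne f

/-! ### Small categories enriched in topological spaces -/

structure ECat : Type 1 where
  Obj : Type
  Hom : Obj → Obj → Type
  str : ∀ a b, TopologicalSpace (Hom a b)
  eid : ∀ a, Hom a a
  comp : ∀ {a b c : Obj}, Hom a b → Hom b c → Hom a c
  continuous_comp : ∀ a b c, Continuous (fun p : Hom a b × Hom b c => comp p.1 p.2)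
  id_comp : ∀ {a b : Obj} (f : Hom a b), comp (eid a) f = f
  comp_id : ∀ {a b : Obj} (f : Hom a b), comp f (eid b) = f
  assoc : ∀ {a b c d : Obj} (x : Hom a b) (y : Hom b c) (z : Hom c d),
    comp (comp x y) z = comp x (comp y z)

attribute [instance] ECat.str

/-- Topologically enriched functors, the morphisms of `ECat`. -/
structure EFunctor (X Y : ECat) where
  toFun : X.Obj → Y.Obj
  map : ∀ {a b : X.Obj}, X.Hom a b → Y.Hom (toFun a) (toFun b)
  continuous_map : ∀ a b : X.Obj, Continuous fun p : X.Hom a b => map p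
  map_id : ∀ a : X.Obj, map (X.eid a) = Y.eid (toFun a)
  map_comp : ∀ {a b c : X.Obj} (x : X.Hom a b) (y : X.Hom b c),
    map (X.comp x y) = Y.comp (map x) (map y)

instance : Category ECat where
  Hom := EFunctor
  id X := ⟨id, fun p => p, fun _ _ => continuous_id, fun _ => rfl, fun _ _ => rfl⟩
  comp f g := ⟨g.toFun ∘ f.toFun, fun p => g.map (f.map p),
    fun a b => (g.continuous_map _ _).comp (f.continuous_map _ _),
    fun a => by simp only [f.map_id, g.map_id]; rfl,
    fun x y => by simp only [f.map_comp, g.map_comp]⟩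

/-- The forgetful functor from enriched small categories to flows,
i.e. the inclusion `Cat ⊂ Flow`. -/
def forgetECat : ECat ⥤ DFlow where
  obj X := ⟨X.Obj, X.Hom, X.str, X.comp, X.continuous_comp, X.assoc⟩
  map f := ⟨f.toFun, f.map, f.continuous_map, f.map_comp⟩
  map_id _ := rfl
  map_comp _ _ := rfl

/-! ### Weak homotopy equivalences and Serre fibrations -/

/-- The map induced on path components by a continuous map. -/
def zerothMap {X Y : Type} [TopologicalSpace X] [TopologicalSpace Y] (f : C(X, Y)) :
    ZerothHomotopy X → ZerothHomotopy Y :=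
  Quotient.map' f (fun a b (h : Joined a b) => (⟨h.somePath.map f.continuous⟩ : Joined _ _))

/-- The map induced on generalized loops by a continuous map. -/
def genLoopMap {X Y : Type} [TopologicalSpace X] [TopologicalSpace Y] (f : C(X, Y))
    {N : Type} {x : X} (g : GenLoop N X x) : GenLoop N Y (f x) :=
  ⟨f.comp g.1, fun y hy => by simp [g.2 y hy]⟩

/-- The map induced on homotopy groups by a continuous map. -/
def homotopyGroupMap {X Y : Type} [TopologicalSpace X] [TopologicalSpace Y] (f : C(X, Y))
    (N : Type) (x : X) : HomotopyGroup N X x → HomotopyGroup N Y (f x) :=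
  Quotient.map' (genLoopMap f)
    (fun g h (H : GenLoop.Homotopic g h) =>
      (H.elim (fun K => ⟨K.compContinuousMap f⟩) : GenLoop.Homotopic _ _))

/-- A continuous map is a weak homotopy equivalence if it induces a bijection on
path components and bijections on all homotopy groups at all base points. -/
def IsWeakHomotopyEquiv {X Y : Type} [TopologicalSpace X] [TopologicalSpace Y]
    (f : C(X, Y)) : Prop :=
  Function.Bijective (zerothMap f) ∧
    ∀ (n : ℕ) (x : X), Function.Bijective (homotopyGroupMap f (Fin n) x)

/-- A continuous map is a Serre fibration (q-fibration) if it has the homotopy lifting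
property with respect to all disks. -/
def IsSerreFibration {X Y : Type} [TopologicalSpace X] [TopologicalSpace Y]
    (f : C(X, Y)) : Prop :=
  ∀ (n : ℕ) (g : C(gDisk n, X)) (H : C(gDisk n × unitInterval, Y)),
    (∀ d, H (d, 0) = f (g d)) →
    ∃ G : C(gDisk n × unitInterval, X),
      (∀ d, G (d, 0) = g d) ∧ ∀ p, f (G p) = H p

/-! ### Miscellaneous constructions -/

/-- The image of a class of maps of flows under a functor `Flow ⥤ Cat`. -/
def imageProp (Idf : DFlow ⥤ ECat) (P : MorphismProperty DFlow) : MorphismProperty ECat :=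
  fun A B g => ∃ (X Y : DFlow) (f : X ⟶ Y), P f ∧
    ∃ (_ : Idf.obj X = A) (_ : Idf.obj Y = B), HEq (Idf.map f) g

/-- The inverse image of a class of maps of enriched categories under a functor. -/
def invImageProp (Idf : DFlow ⥤ ECat) (P : MorphismProperty ECat) : MorphismProperty DFlow :=
  fun _ _ f => P (Idf.map f)

/-- The terminal enriched small category. -/
def terminalECat : ECat where
  Obj := PUnit
  Hom _ _ := PUnit
  str _ _ := ⊥
  eid _ := PUnit.unit
  comp _ _ := PUnit.unit
  continuous_comp _ _ _ := continuous_const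
  id_comp _ := rfl
  comp_id _ := rfl
  assoc _ _ _ := rfl

/-- The canonical enriched functor to the terminal enriched category. -/
def ECat.toTerminal (X : ECat) : X ⟶ terminalECat :=
  ⟨fun _ => PUnit.unit, fun _ => PUnit.unit, fun _ _ => @continuous_const _ _ _ (terminalECat.str _ _) _,
    fun _ => rfl, fun _ _ => rfl⟩

/-- The empty enriched small category. -/
def emptyECat : ECat where
  Obj := Empty
  Hom a _ := a.elim
  str a _ := a.elim
  eid a := a.elim
  comp {a} _ _ := a.elim
  continuous_comp a _ _ := a.elim
  id_comp {a} _ := a.elim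
  comp_id {a} _ := a.elim
  assoc {a} _ _ _ := a.elim

/-- The canonical enriched functor from the empty enriched category. -/
def ECat.fromEmpty (X : ECat) : emptyECat ⟶ X :=
  ⟨fun a => a.elim, fun {a} _ => a.elim, fun a _ => a.elim, fun a => a.elim,
    fun {a} _ _ => a.elim⟩

/-- The small category `{0 ≅ 1}` with two isomorphic objects,
the chaotic category on two objects. -/
def isoCat : ECat where
  Obj := Bool
  Hom _ _ := PUnit
  str _ _ := ⊥
  eid _ := PUnit.unit
  comp _ _ := PUnit.unit
  continuous_comp _ _ _ := continuous_const
  id_comp _ := rfl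
  comp_id _ := rfl
  assoc _ _ _ := rfl

/-- The weak equivalences of the q-model structure on `Cat`: enriched functors
bijective on objects inducing weak homotopy equivalences on all morphism spaces. -/
def WqECat : MorphismProperty ECat := fun X _ F =>
  Function.Bijective F.toFun ∧
    ∀ a b : X.Obj, IsWeakHomotopyEquiv ⟨fun x : X.Hom a b => F.map x, F.continuous_map a b⟩

/-- The fibrations of the q-model structure on `Cat`: enriched functors inducing Serre
fibrations (q-fibrations) on all morphism spaces. -/
def FqECat : MorphismProperty ECat := fun X _ F =>
  ∀ a b : X.Obj, IsSerreFibration ⟨fun x : X.Hom a b => F.map x, F.continuous_map a b⟩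

/-- The weak equivalences of the q-model structure of flows: bijections on states
inducing weak homotopy equivalences on all path spaces. -/
def WqFlow : MorphismProperty DFlow := fun X _ f =>
  Function.Bijective f.toFun ∧
    ∀ a b : X.States,
      IsWeakHomotopyEquiv ⟨fun x : X.Path a b => f.map x, f.continuous_map a b⟩
/-!
Only the universal property of the left adjoint `𝕀` is used, by mapping `𝕀(W)` to small test
categories. Into the chaotic category on `Bool` this shows that every object of `𝕀(W)` is a
state of `W`; into the one-object category with discrete endomorphism monoid `(Bool, ||)`, sending
every execution path to `true`, it shows that no execution path of `W` lies in the path component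
of an identity of `𝕀(W)`. If `g = F ∘ η : Z → X` is a weak equivalence of flows, it is onto path
components of `X(α, α)`, so some execution path is sent into the component of the identity; if `F`
were a weak homotopy equivalence on `𝕀(Z)(α, α)`, it would be injective on path components and
that path would be joined to the identity. For the last claim, `𝕀({0})` is the terminal category
(the constant functor on it agrees with the identity on `{0}`), whereas `{0} → 1` is no weak
equivalence of flows, its loop space being empty; and `{0}` is q-cofibrant because `∅ → {0}` is
the generating cofibration `C`.
-/

-- Objects of `forgetECat.obj Y` are not syntactically objects of `Y`, which blocks instance search.
instance (Y : ECat) (a b : (forgetECat.obj Y).States) : TopologicalSpace (Y.Hom a b) :=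
  Y.str a b

lemma FlowHom.ext_heq {X Y : DFlow} {f g : X ⟶ Y} (h₁ : f.toFun = g.toFun)
    (h₂ : ∀ (a b : X.States) (p : X.Path a b), f.map p ≍ g.map p) : f = g := by
  obtain ⟨f₁, f₂, _, _⟩ := f
  obtain ⟨g₁, g₂, _, _⟩ := g
  subst h₁
  obtain rfl : @f₂ = @g₂ := by
    funext a b p
    exact eq_of_heq (h₂ a b p)
  rfl

lemma le_cofClass {M : Type _} [Category M] (S : MorphismProperty M) : S ≤ cofClass S :=
  fun _ _ _ hi _ _ _ hp => hp _ hi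

lemma cofClass_pointFlow_fromEmpty : cofClass IglCR pointFlow.fromEmpty :=
  le_cofClass IglCR pointFlow.fromEmpty (Or.inr (Or.inl ⟨rfl, rfl,
    heq_of_eq (FlowHom.ext_heq (funext fun x => x.elim) fun a => a.elim)⟩))

section WeakHomotopyEquiv

variable {A B : Type} [TopologicalSpace A] [TopologicalSpace B]

lemma Joined.eq_of_discreteTopology [DiscreteTopology A] {x y : A} (h : Joined x y) : x = y := by
  obtain ⟨γ⟩ := h
  simpa using PreconnectedSpace.constant inferInstance γ.continuous (x := 0) (y := 1)

lemma IsWeakHomotopyEquiv.joined_iff {f : C(A, B)} (hf : IsWeakHomotopyEquiv f) {x y : A} :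
    Joined (f x) (f y) ↔ Joined x y :=
  ⟨fun h => Quotient.exact (hf.1.1 (Quotient.sound h)), fun h => h.map f.continuous⟩

lemma IsWeakHomotopyEquiv.exists_joined {f : C(A, B)} (hf : IsWeakHomotopyEquiv f) (y : B) :
    ∃ x, Joined (f x) y := by
  obtain ⟨q, hq⟩ := hf.1.2 (Quotient.mk _ y)
  induction q using Quotient.inductionOn with
  | h x => exact ⟨x, Quotient.exact hq⟩

lemma not_isWeakHomotopyEquiv_of_isEmpty [IsEmpty A] [Nonempty B] (f : C(A, B)) :
    ¬ IsWeakHomotopyEquiv f :=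
  fun hf => isEmptyElim (hf.exists_joined (Classical.arbitrary B)).choose

lemma bijective_of_subsingleton_of_nonempty {α β : Sort _} [Subsingleton α] [Nonempty α]
    [Subsingleton β] (f : α → β) : Function.Bijective f :=
  ⟨fun _ _ _ => Subsingleton.elim _ _, fun _ => ⟨Classical.arbitrary α, Subsingleton.elim _ _⟩⟩

lemma isWeakHomotopyEquiv_of_subsingleton [Subsingleton A] [Nonempty A] [Subsingleton B]
    (f : C(A, B)) : IsWeakHomotopyEquiv f := by
  have genLoop_subsingleton (X : Type) [TopologicalSpace X] [Subsingleton X] (n : ℕ) (x : X) :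
      Subsingleton (GenLoop (Fin n) X x) :=
    ⟨fun _ _ => Subtype.ext (ContinuousMap.ext fun _ => Subsingleton.elim _ _)⟩
  have : Subsingleton (ZerothHomotopy B) := Quot.Subsingleton
  refine ⟨bijective_of_subsingleton_of_nonempty _, fun n x => ?_⟩
  have := genLoop_subsingleton A n x
  have := genLoop_subsingleton B n (f x)
  have : Subsingleton (HomotopyGroup (Fin n) A x) := Quot.Subsingleton
  have : Subsingleton (HomotopyGroup (Fin n) B (f x)) := Quot.Subsingleton
  have : Nonempty (HomotopyGroup (Fin n) A x) := ⟨Quotient.mk _ GenLoop.const⟩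
  exact bijective_of_subsingleton_of_nonempty _

end WeakHomotopyEquiv

def orCat : ECat where
  Obj := PUnit
  Hom _ _ := Bool
  str _ _ := inferInstance
  eid _ := false
  comp x y := x || y
  continuous_comp _ _ _ := continuous_of_discreteTopology
  id_comp _ := rfl
  comp_id := Bool.or_false
  assoc := Bool.or_assoc

def DFlow.toOrCat (W : DFlow) : W ⟶ forgetECat.obj orCat :=
  ⟨fun _ => PUnit.unit, fun _ => true,
    fun _ _ => @continuous_const _ _ _ (orCat.str PUnit.unit PUnit.unit) _, fun _ _ => rfl⟩

def ECat.toIsoCat (X : ECat) (f : X.Obj → Bool) : X ⟶ isoCat :=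
  ⟨f, fun _ => PUnit.unit, fun _ _ => @continuous_const _ _ _ (isoCat.str _ _) _, fun _ => rfl,
    fun _ _ => rfl⟩

def ECat.const (X : ECat) {Y : ECat} (y : Y.Obj) : X ⟶ Y :=
  ⟨fun _ => y, fun _ => Y.eid y, fun _ _ => continuous_const, fun _ => rfl,
    fun _ _ => (Y.id_comp _).symm⟩

def ECat.IsTrivial (X : ECat) : Prop :=
  Nonempty X.Obj ∧ Subsingleton X.Obj ∧ ∀ a b : X.Obj, Subsingleton (X.Hom a b)

lemma isTrivial_terminalECat : terminalECat.IsTrivial :=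
  ⟨⟨PUnit.unit⟩, inferInstanceAs (Subsingleton PUnit),
    fun _ _ => inferInstanceAs (Subsingleton PUnit)⟩

lemma wqECat_of_isTrivial {X Y : ECat} (hX : X.IsTrivial) (hY : Y.IsTrivial) (F : X ⟶ Y) :
    WqECat F := by
  obtain ⟨_, _, _⟩ := hX
  obtain ⟨-, _, _⟩ := hY
  refine ⟨bijective_of_subsingleton_of_nonempty _, fun a b => ?_⟩
  obtain rfl : a = b := Subsingleton.elim a b
  have : Nonempty (X.Hom a a) := ⟨X.eid a⟩
  exact isWeakHomotopyEquiv_of_subsingleton _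

lemma DFlow.isSetFlow_ofSet (S : Type) : (DFlow.ofSet S).IsSetFlow :=
  fun _ _ => inferInstanceAs (IsEmpty Empty)

lemma not_wqFlow_of_isEmpty_path {A : DFlow} {B : ECat} (f : A ⟶ forgetECat.obj B)
    (a : A.States) [IsEmpty (A.Path a a)] : ¬ WqFlow f := fun hf =>
  have : Nonempty ((forgetECat.obj B).Path (f.toFun a) (f.toFun a)) := ⟨B.eid _⟩
  not_isWeakHomotopyEquiv_of_isEmpty _ (hf.2 a a)

namespace CategoryTheory.Adjunction

variable {L : DFlow ⥤ ECat} (adj : L ⊣ forgetECat)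

lemma unit_app_toFun_surjective (W : DFlow) : Function.Surjective (adj.unit.app W).toFun := by
  classical
  intro α
  have h : (L.obj W).toIsoCat (fun β => decide (β ∈ Set.range (adj.unit.app W).toFun))
      = (L.obj W).toIsoCat (fun _ => true) :=
    (adj.homEquiv _ _).injective
      (FlowHom.ext_heq (funext fun b => decide_eq_true ⟨b, rfl⟩) fun _ _ _ => HEq.rfl)
  exact of_decide_eq_true (congrFun (congrArg EFunctor.toFun h) α)

lemma not_joined_unit_map_eid {W : DFlow} {b : W.States} (p : W.Path b b) :
    ¬ Joined ((adj.unit.app W).map p) ((L.obj W).eid ((adj.unit.app W).toFun b)) := by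
  set T := (adj.homEquiv W orCat).symm W.toOrCat
  have hT : T.map ((adj.unit.app W).map p) = true := by
    exact congrArg (fun k : W ⟶ forgetECat.obj orCat => (k.map p : Bool))
      ((adj.homEquiv W orCat).apply_symm_apply W.toOrCat)
  intro h
  have hid : (T.map ((L.obj W).eid ((adj.unit.app W).toFun b)) : Bool) = false := T.map_id _
  have h' : Joined true false := by
    rw [← hT, ← hid]
    exact h.map (T.continuous_map _ _)
  exact Bool.noConfusion h'.eq_of_discreteTopology

lemma const_unit_app_eq_id {W : DFlow} [Subsingleton W.States] (hW : W.IsSetFlow)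
    (b : W.States) : (L.obj W).const ((adj.unit.app W).toFun b) = 𝟙 _ :=
  (adj.homEquiv _ _).injective (FlowHom.ext_heq
    (funext fun b' => congrArg (adj.unit.app W).toFun (Subsingleton.elim b b'))
    fun a _ p => (hW a _).elim p)

lemma isTrivial_obj_of_isSetFlow (adj : L ⊣ forgetECat) {W : DFlow} [Unique W.States]
    (hW : W.IsSetFlow) : (L.obj W).IsTrivial := by
  have h := adj.const_unit_app_eq_id hW (default : W.States)
  have hObj (α : (L.obj W).Obj) : (adj.unit.app W).toFun (default : W.States) = α :=
    congrFun (congrArg EFunctor.toFun h) α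
  refine ⟨⟨(adj.unit.app W).toFun (default : W.States)⟩,
    ⟨fun α β => (hObj α).symm.trans (hObj β)⟩, fun α β => ⟨fun m m' => ?_⟩⟩
  obtain rfl := hObj α
  obtain rfl := hObj β
  exact eq_of_heq ((congr_arg_heq (fun F : L.obj W ⟶ L.obj W => F.map m) h).symm.trans
    (congr_arg_heq (fun F : L.obj W ⟶ L.obj W => F.map m') h))

theorem not_isWeakHomotopyEquiv_endo {Z : DFlow} {X : ECat} (F : L.obj Z ⟶ X)
    (hF : WqFlow (adj.homEquiv Z X F)) (α : (L.obj Z).Obj) :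
    ¬ IsWeakHomotopyEquiv ⟨fun m : (L.obj Z).Hom α α => F.map m, F.continuous_map α α⟩ := by
  obtain ⟨b, rfl⟩ := adj.unit_app_toFun_surjective Z α
  intro hwe
  obtain ⟨p, hp⟩ := (hF.2 b b).exists_joined (F.map ((L.obj Z).eid ((adj.unit.app Z).toFun b)))
  exact adj.not_joined_unit_map_eid p (hwe.joined_iff.mp hp)

theorem not_wqECat {Z : DFlow} {X : ECat} (hX : Nonempty X.Obj) (F : L.obj Z ⟶ X)
    (hF : WqFlow (adj.homEquiv Z X F)) : ¬ WqECat F := fun hW => by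
  obtain ⟨x⟩ := hX
  obtain ⟨z, -⟩ := hF.1.2 x
  exact adj.not_isWeakHomotopyEquiv_endo F hF _ (hW.2 ((adj.unit.app Z).toFun z) _)

theorem not_forall_wqECat_iff_wqFlow :
    ¬ ∀ (A : DFlow) (B : ECat) (f : L.obj A ⟶ B),
        cofClass IglCR A.fromEmpty → (WqECat f ↔ WqFlow (adj.homEquiv A B f)) := fun h => by
  have hpoint : pointFlow.IsSetFlow := DFlow.isSetFlow_ofSet PUnit
  have := hpoint PUnit.unit PUnit.unit
  have : Unique pointFlow.States := inferInstanceAs (Unique PUnit)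
  refine not_wqFlow_of_isEmpty_path _ PUnit.unit
    ((h pointFlow terminalECat (ECat.toTerminal _) cofClass_pointFlow_fromEmpty).mp ?_)
  exact wqECat_of_isTrivial (adj.isTrivial_obj_of_isSetFlow hpoint) isTrivial_terminalECat _

end CategoryTheory.Adjunction

/-- let `X` be a topologically enriched small category with at least
one object and `g : Z → X` a map of flows which is a weak equivalence of the q-model
structure of flows (e.g. a q-cofibrant replacement of `X`). Then for any object the
induced enriched functor `𝕀(Z) → X` is not a weak homotopy equivalence on the
endomorphism space of that object, hence it is not a weak equivalence of `(Cat)_q`;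
consequently the left Quillen adjoint `𝕀 : (Flow)_q → (Cat)_q` is not a left Quillen
equivalence. -/
theorem I_not_left_Quillen_equivalence
    (Idf : DFlow ⥤ ECat) (adj : Idf ⊣ forgetECat)
    (X : ECat) (hX : Nonempty X.Obj) (Z : DFlow) (g : Z ⟶ forgetECat.obj X)
    (hg : WqFlow g) :
    (∀ α : (Idf.obj Z).Obj,
      ¬ IsWeakHomotopyEquiv
        ⟨fun m : (Idf.obj Z).Hom α α => ((adj.homEquiv Z X).symm g).map m,
          ((adj.homEquiv Z X).symm g).continuous_map α α⟩) ∧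
    ¬ WqECat ((adj.homEquiv Z X).symm g) ∧
    ¬ (∀ (A : DFlow) (B : ECat) (f : Idf.obj A ⟶ B),
        cofClass IglCR A.fromEmpty → (WqECat f ↔ WqFlow (adj.homEquiv A B f))) := by
  generalize hF : (adj.homEquiv Z X).symm g = F
  obtain rfl := (adj.homEquiv Z X).symm_apply_eq.mp hF
  exact ⟨adj.not_isWeakHomotopyEquiv_endo F hg, adj.not_wqECat hX F hg,
    adj.not_forall_wqECat_iff_wqFlow⟩
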